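/- Let f : ℝ^d → ℝ be nonnegative, integrable, with ∫ f = 1, and suppose all sets Λⁿ ⊆ ℝ^d are uniformly discrete with a common separation constant δ₀ > 0. Let K ⊆ ℝ^d be compact. Then ∫_K ∑_{λ∈Λⁿ∖Q_n} f(x−λ) dx → 0 as n → ∞, where Q_n = [−n/2, n/2]^d. -/

import Mathlib

/-!
Substituting `y = x - λ` turns the integral into `∫ ‖f y‖ · #{λ ∈ Λⁿ \ Q_n : y + λ ∈ K} dy`.
If `K ⊆ B(0, r)`, the balls `B(λ, δ₀/2)` of the points counted are disjoint and lie in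
`B(-y, r + δ₀/2)`, so the count is bounded independently of `n` and `y`; and it vanishes unless
`‖y‖ ≥ n/2 - r`. The integral is thus at most a constant times the tail `∫_{‖y‖ ≥ n/2 - r} ‖f‖`,
which tends to `0` by dominated convergence.
-/

open MeasureTheory Filter Pointwise

noncomputable section

/-- The closed cube `[-R/2, R/2]^d`. -/
def cube (d : ℕ) (R : ℝ) : Set (Fin d → ℝ) := {y | ∀ i, |y i| ≤ R / 2}

/-- The open cube `(-ε/2, ε/2)^d`. -/
def ocube (d : ℕ) (ε : ℝ) : Set (Fin d → ℝ) := {y | ∀ i, |y i| < ε / 2}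

/-- `f + Λ` is a packing at level 1: `∑_{λ ∈ Λ} f(x - λ) ≤ 1` a.e. -/
def IsPacking {d : ℕ} (f : (Fin d → ℝ) → ℝ) (Λ : Set (Fin d → ℝ)) : Prop :=
  ∀ᵐ x : Fin d → ℝ, (∑' l : Λ, f (x - (l : Fin d → ℝ))) ≤ 1

/-- `Λ` is uniformly discrete with separation constant `δ`: distinct points are at
distance greater than `δ`. -/
def Separated {d : ℕ} (δ : ℝ) (Λ : Set (Fin d → ℝ)) : Prop :=
  ∀ a ∈ Λ, ∀ b ∈ Λ, a ≠ b → δ < dist a b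

/-- Weak convergence of the sets `Λⁿ` to `Λ`: for every `ε, R > 0`, eventually
`Λⁿ ∩ Q_R ⊆ Λ + Q_ε` and `Λ ∩ Q_R ⊆ Λⁿ + Q_ε`. -/
def WeakConv {d : ℕ} (Λn : ℕ → Set (Fin d → ℝ)) (Λ : Set (Fin d → ℝ)) : Prop :=
  ∀ ε > (0 : ℝ), ∀ R > (0 : ℝ), ∃ N : ℕ, ∀ n ≥ N,
    Λn n ∩ cube d R ⊆ Λ + ocube d ε ∧ Λ ∩ cube d R ⊆ Λn n + ocube d ε

/-- The upper density of `Λ` is at least `c`: for every `ε > 0` there are arbitrarily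
large `R` and a cube of side `R` containing at least `(c - ε) R^d` points of `Λ`. -/
def UpperDensGE {d : ℕ} (Λ : Set (Fin d → ℝ)) (c : ℝ) : Prop :=
  ∀ ε > (0 : ℝ), ∀ R₀ : ℝ, ∃ R > R₀, ∃ x : Fin d → ℝ,
    (((Λ ∩ {y | ∀ i, |y i - x i| ≤ R / 2}).ncard : ℝ)) ≥ (c - ε) * R ^ d

open scoped ENNReal Topology
open Metric Function

lemma Separated.mono {d : ℕ} {δ : ℝ} {Λ Λ' : Set (Fin d → ℝ)} (h : Separated δ Λ)
    (hsub : Λ' ⊆ Λ) : Separated δ Λ' :=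
  fun a ha b hb => h a (hsub ha) b (hsub hb)

lemma Separated.pairwise_disjoint_ball {d : ℕ} {δ : ℝ} {Λ : Set (Fin d → ℝ)}
    (h : Separated δ Λ) : Pairwise (Disjoint on fun l : Λ => ball (l : Fin d → ℝ) (δ / 2)) :=
  fun l₁ l₂ hne => ball_disjoint_ball <| by
    linarith [h _ l₁.2 _ l₂.2 (Subtype.coe_injective.ne hne)]

lemma Separated.countable {d : ℕ} {δ : ℝ} (hδ : 0 < δ) {Λ : Set (Fin d → ℝ)}
    (h : Separated δ Λ) : Countable Λ :=
  h.pairwise_disjoint_ball.countable_of_isOpen_disjoint (fun _ => isOpen_ball)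
    fun _ => nonempty_ball.2 (by linarith)

def overlapBound (d : ℕ) (δ r : ℝ) : ℝ≥0∞ :=
  volume (closedBall (0 : Fin d → ℝ) (r + δ / 2)) / volume (ball (0 : Fin d → ℝ) (δ / 2))

lemma overlapBound_ne_top {d : ℕ} {δ : ℝ} (hδ : 0 < δ) (r : ℝ) : overlapBound d δ r ≠ ∞ :=
  ENNReal.div_ne_top measure_closedBall_lt_top.ne (measure_ball_pos _ _ (by linarith)).ne'

lemma Separated.tsum_indicator_closedBall_le {d : ℕ} {δ : ℝ} (hδ : 0 < δ)
    {Λ : Set (Fin d → ℝ)} (h : Separated δ Λ) (z : Fin d → ℝ) (r : ℝ) :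
    ∑' l : Λ, (closedBall z r).indicator 1 (l : Fin d → ℝ) ≤ overlapBound d δ r := by
  have := h.countable hδ
  rw [overlapBound, ENNReal.le_div_iff_mul_le (Or.inl (measure_ball_pos _ _ (by linarith)).ne')
    (Or.inl measure_ball_lt_top.ne), ← ENNReal.tsum_mul_right]
  calc _ ≤ ∑' l : Λ, volume (ball (l : Fin d → ℝ) (δ / 2) ∩ closedBall z (r + δ / 2)) := by
        refine ENNReal.tsum_le_tsum fun l => ?_
        by_cases hl : (l : Fin d → ℝ) ∈ closedBall z r
        · have hsub : ball (l : Fin d → ℝ) (δ / 2) ⊆ closedBall z (r + δ / 2) :=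
            ball_subset_closedBall.trans (closedBall_subset_closedBall' (by
              linarith [mem_closedBall.1 hl]))
          rw [Set.indicator_of_mem hl, Pi.one_apply, one_mul, Set.inter_eq_left.2 hsub,
            Measure.addHaar_ball_center volume (l : Fin d → ℝ)]
        · simp [hl]
    _ = volume (⋃ l : Λ, ball (l : Fin d → ℝ) (δ / 2) ∩ closedBall z (r + δ / 2)) :=
        (measure_iUnion (fun l₁ l₂ hne => (h.pairwise_disjoint_ball hne).mono
          Set.inter_subset_left Set.inter_subset_left)
          fun _ => measurableSet_ball.inter measurableSet_closedBall).symm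
    _ ≤ volume (closedBall z (r + δ / 2)) :=
        measure_mono (Set.iUnion_subset fun _ => Set.inter_subset_right)
    _ = volume (closedBall (0 : Fin d → ℝ) (r + δ / 2)) := by
        rw [Measure.addHaar_closedBall_center, Measure.addHaar_closedBall_center]

lemma lt_norm_of_notMem_cube {d : ℕ} {R : ℝ} {l : Fin d → ℝ} (hl : l ∉ cube d R) :
    R / 2 < ‖l‖ := by
  simp only [cube, Set.mem_ofPred_eq, not_forall, not_le] at hl
  obtain ⟨i, hi⟩ := hl
  exact hi.trans_le (by simpa using norm_le_pi_norm l i)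

lemma Separated.tsum_indicator_add_le {d : ℕ} {δ : ℝ} (hδ : 0 < δ) {Λ : Set (Fin d → ℝ)}
    (hΛ : Separated δ Λ) {K : Set (Fin d → ℝ)} {r : ℝ} (hK : K ⊆ closedBall 0 r) (R : ℝ)
    (y : Fin d → ℝ) :
    ∑' l : ↥(Λ \ cube d R), K.indicator 1 (y + l) ≤
      {y | R / 2 - r ≤ ‖y‖}.indicator (fun _ => overlapBound d δ r) y := by
  by_cases hy : y ∈ {y : Fin d → ℝ | R / 2 - r ≤ ‖y‖}
  · rw [Set.indicator_of_mem hy]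
    refine le_trans (ENNReal.tsum_le_tsum fun l => ?_)
      ((hΛ.mono Set.sdiff_subset).tsum_indicator_closedBall_le hδ (-y) r)
    by_cases hl : y + l ∈ K
    · have : (l : Fin d → ℝ) ∈ closedBall (-y) r := by
        simpa [dist_eq_norm, add_comm] using hK hl
      simp [hl, this]
    · simp [hl]
  · rw [Set.indicator_of_notMem hy, nonpos_iff_eq_zero, ENNReal.tsum_eq_zero]
    refine fun l => Set.indicator_of_notMem (fun hl => hy ?_) _
    show R / 2 - r ≤ ‖y‖
    have := mem_closedBall_zero_iff.1 (hK hl)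
    linarith [lt_norm_of_notMem_cube l.2.2, norm_le_add_norm_add' y (l : Fin d → ℝ)]

lemma setLIntegral_tsum_sub_eq {G : Type*} [MeasurableSpace G] [AddGroup G] [MeasurableAdd G]
    {μ : Measure G} [μ.IsAddRightInvariant] {ι : Type*} [Countable ι] {g : G → ℝ≥0∞}
    (hg : AEMeasurable g μ) {K : Set G} (hK : MeasurableSet K) (p : ι → G) :
    ∫⁻ x in K, ∑' i, g (x - p i) ∂μ = ∫⁻ y, g y * ∑' i, K.indicator 1 (y + p i) ∂μ := by
  calc ∫⁻ x in K, ∑' i, g (x - p i) ∂μ = ∑' i, ∫⁻ x in K, g (x - p i) ∂μ :=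
        lintegral_tsum fun i => (hg.comp_quasiMeasurePreserving
          (measurePreserving_sub_right μ (p i)).quasiMeasurePreserving).restrict
    _ = ∑' i, ∫⁻ y, K.indicator 1 (y + p i) * g y ∂μ := by
        congr 1 with i
        rw [← lintegral_indicator hK,
          ← lintegral_sub_right_eq_self (fun y => K.indicator 1 (y + p i) * g y) (p i)]
        congr 1 with x
        by_cases hx : x ∈ K <;> simp [hx]
    _ = ∫⁻ y, ∑' i, K.indicator 1 (y + p i) * g y ∂μ :=
        (lintegral_tsum fun i => ((measurable_one.indicator hK).comp
          (measurable_add_const (p i))).aemeasurable.mul hg).symm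
    _ = ∫⁻ y, g y * ∑' i, K.indicator 1 (y + p i) ∂μ := by
        simp_rw [ENNReal.tsum_mul_right, mul_comm]

lemma Separated.setLIntegral_tsum_sdiff_cube_le {d : ℕ} {δ : ℝ} (hδ : 0 < δ)
    {Λ : Set (Fin d → ℝ)} (hΛ : Separated δ Λ) {K : Set (Fin d → ℝ)} (hKm : MeasurableSet K)
    {r : ℝ} (hK : K ⊆ closedBall 0 r) {g : (Fin d → ℝ) → ℝ≥0∞} (hg : AEMeasurable g)
    (R : ℝ) :
    ∫⁻ x in K, ∑' l : ↥(Λ \ cube d R), g (x - l) ≤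
      overlapBound d δ r * ∫⁻ y in {y | R / 2 - r ≤ ‖y‖}, g y := by
  have := (hΛ.mono (Set.sdiff_subset (t := cube d R))).countable hδ
  have hT : MeasurableSet {y : Fin d → ℝ | R / 2 - r ≤ ‖y‖} :=
    measurableSet_le measurable_const measurable_norm
  calc ∫⁻ x in K, ∑' l : ↥(Λ \ cube d R), g (x - l)
      = ∫⁻ y, g y * ∑' l : ↥(Λ \ cube d R), K.indicator 1 (y + l) :=
        setLIntegral_tsum_sub_eq hg hKm _
    _ ≤ ∫⁻ y, {y | R / 2 - r ≤ ‖y‖}.indicator (fun y => overlapBound d δ r * g y) y :=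
        lintegral_mono fun y => by
          rw [Set.indicator_mul_left, mul_comm]
          gcongr
          exact hΛ.tsum_indicator_add_le hδ hK R y
    _ = overlapBound d δ r * ∫⁻ y in {y | R / 2 - r ≤ ‖y‖}, g y := by
        rw [lintegral_indicator hT, lintegral_const_mul' _ _ (overlapBound_ne_top hδ r)]

lemma tendsto_setLIntegral_norm_ge_zero {E : Type*} [NormedAddCommGroup E] [MeasurableSpace E]
    [OpensMeasurableSpace E] {μ : Measure E} {g : E → ℝ≥0∞} (hg : AEMeasurable g μ)
    (hfin : ∫⁻ y, g y ∂μ ≠ ∞) {ι : Type*} {l : Filter ι} [l.IsCountablyGenerated] {a : ι → ℝ}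
    (ha : Tendsto a l atTop) :
    Tendsto (fun i => ∫⁻ y in {y | a i ≤ ‖y‖}, g y ∂μ) l (𝓝 0) := by
  have hT : ∀ i, MeasurableSet {y : E | a i ≤ ‖y‖} :=
    fun i => measurableSet_le measurable_const measurable_norm
  simp_rw [← lintegral_indicator (hT _)]
  simpa using tendsto_lintegral_filter_of_dominated_convergence' g
    (Eventually.of_forall fun i => hg.indicator (hT i))
    (Eventually.of_forall fun i => ae_of_all _ fun y => Set.indicator_le_self _ _ y) hfin
    (ae_of_all _ fun y => tendsto_const_nhds.congr' <|
      (ha.eventually_gt_atTop ‖y‖).mono fun i hi =>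
        (Set.indicator_of_notMem (s := {y : E | a i ≤ ‖y‖}) hi.not_ge _).symm)

theorem tail_lemma_general {d : ℕ} (f : (Fin d → ℝ) → ℝ)
    (hfi : Integrable f)
    (Λn : ℕ → Set (Fin d → ℝ)) (δ₀ : ℝ) (hδ₀ : 0 < δ₀)
    (hsepn : ∀ n, Separated δ₀ (Λn n))
    (K : Set (Fin d → ℝ)) (hK : IsCompact K) :
    Tendsto (fun n : ℕ =>
        ∫ x in K, ∑' l : ↥(Λn n \ cube d (n : ℝ)), f (x - (l : Fin d → ℝ)))
      atTop (nhds 0) := by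
  obtain ⟨r, hKr⟩ := hK.isBounded.subset_closedBall 0
  have hradius : Tendsto (fun n : ℕ => (n : ℝ) / 2 - r) atTop atTop :=
    tendsto_atTop_add_const_right _ _
      (tendsto_natCast_atTop_atTop.atTop_div_const two_pos)
  have hbound : Tendsto (fun n : ℕ =>
      overlapBound d δ₀ r * ∫⁻ y in {y | (n : ℝ) / 2 - r ≤ ‖y‖}, ‖f y‖ₑ) atTop (𝓝 0) := by
    simpa using ENNReal.Tendsto.const_mul (tendsto_setLIntegral_norm_ge_zero hfi.aemeasurable.enorm
      hfi.hasFiniteIntegral.ne hradius) (Or.inr (overlapBound_ne_top hδ₀ r))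
  rw [tendsto_zero_iff_enorm_tendsto_zero]
  refine tendsto_of_tendsto_of_tendsto_of_le_of_le tendsto_const_nhds hbound
    (fun _ => zero_le) fun n => ?_
  calc ‖∫ x in K, ∑' l : ↥(Λn n \ cube d (n : ℝ)), f (x - l)‖ₑ
      ≤ ∫⁻ x in K, ‖∑' l : ↥(Λn n \ cube d (n : ℝ)), f (x - l)‖ₑ :=
        enorm_integral_le_lintegral_enorm _
    _ ≤ ∫⁻ x in K, ∑' l : ↥(Λn n \ cube d (n : ℝ)), ‖f (x - l)‖ₑ :=
        lintegral_mono fun _ => enorm_tsum_le_tsum_enorm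
    _ ≤ _ := (hsepn n).setLIntegral_tsum_sdiff_cube_le hδ₀ hK.isClosed.measurableSet hKr
        hfi.aemeasurable.enorm n

theorem tail_lemma {d : ℕ} (f : (Fin d → ℝ) → ℝ)
    (hf0 : ∀ x, 0 ≤ f x) (hfi : Integrable f) (hint : ∫ x, f x = 1)
    (Λn : ℕ → Set (Fin d → ℝ)) (δ₀ : ℝ) (hδ₀ : 0 < δ₀)
    (hsepn : ∀ n, Separated δ₀ (Λn n))
    (K : Set (Fin d → ℝ)) (hK : IsCompact K) :
    Tendsto (fun n : ℕ =>
        ∫ x in K, ∑' l : ↥(Λn n \ cube d (n : ℝ)), f (x - (l : Fin d → ℝ)))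
      atTop (nhds 0) :=
  tail_lemma_general f hfi Λn δ₀ hδ₀ hsepn K hK
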